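/- arXiv:1912.12815 — 3 statements merged into one kernel-verified Lean document; each statement's English description precedes it below -/
import Mathlib

section
/- Let (a_n)_{n∈ℕ} be a sequence of pairwise disjoint infinite subsets of ℕ, let z ⊆ ℕ, and let d ⊆ ℕ be infinite with d ∩ a_n finite for every n. Then there exists an infinite set a ⊆ ℕ such that: (i) a ∩ d is infinite; (ii) a ∩ a_n is finite for every n; and (iii) for every n, n ∈ z if and only if |a ∩ a_n| is even. In particular, z is recoverable from a and the sequence (a_n). -/
theorem stmt2 (a : ℕ → Set ℕ) (z d : Set ℕ)
    (hainf : ∀ n, (a n).Infinite)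
    (hdisj : ∀ i j, i ≠ j → Disjoint (a i) (a j))
    (hdinf : d.Infinite)
    (hd : ∀ n, (d ∩ a n).Finite) :
    ∃ A : Set ℕ, A.Infinite ∧ (A ∩ d).Infinite ∧
      (∀ n, (A ∩ a n).Finite) ∧
      (∀ n, n ∈ z ↔ Even (A ∩ a n).ncard) := by
  classical
  -- a n \ d is infinite, pick a point
  have hdiff : ∀ n, (a n \ d).Infinite := by
    intro n
    have : a n \ d = a n \ (d ∩ a n) := by
      ext y; simp only [Set.mem_diff, Set.mem_inter_iff]; tauto
    rw [this]
    exact (hainf n).diff (hd n)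
  choose x hx using fun n => (hdiff n).nonempty
  set F : ℕ → Set ℕ := fun n =>
    if (n ∈ z ↔ Even (d ∩ a n).ncard) then ∅ else {x n} with hF
  have hFsub : ∀ n, F n ⊆ a n \ d := by
    intro n
    simp only [hF]
    split
    · simp
    · intro y hy; simp at hy; subst hy; exact hx n
  refine ⟨d ∪ ⋃ n, F n, ?_, ?_, ?_, ?_⟩
  · exact hdinf.mono Set.subset_union_left
  · exact hdinf.mono (by intro y hy; exact ⟨Or.inl hy, hy⟩)
  all_goals
    have key : ∀ n, (d ∪ ⋃ m, F m) ∩ a n = (d ∩ a n) ∪ F n := by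
      intro n
      ext y
      simp only [Set.mem_inter_iff, Set.mem_union, Set.mem_iUnion]
      constructor
      · rintro ⟨h1 | ⟨m, hm⟩, h2⟩
        · exact Or.inl ⟨h1, h2⟩
        · right
          rcases eq_or_ne m n with rfl | hmn
          · exact hm
          · exact (((hdisj m n hmn).ne_of_mem (hFsub m hm).1 h2) rfl).elim
      · rintro (⟨h1, h2⟩ | h)
        · exact ⟨Or.inl h1, h2⟩
        · exact ⟨Or.inr ⟨n, h⟩, (hFsub n h).1⟩
  · intro n
    rw [key n]
    refine (hd n).union ?_
    simp only [hF]; split <;> simp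
  · intro n
    rw [key n]
    have hFfin : (F n).Finite := by simp only [hF]; split <;> simp
    have hdisj' : Disjoint (d ∩ a n) (F n) :=
      Set.disjoint_left.2 fun y hy hyF => (hFsub n hyF).2 hy.1
    rw [Set.ncard_union_eq hdisj' (hd n) hFfin]
    by_cases h : (n ∈ z ↔ Even (d ∩ a n).ncard)
    · have : F n = ∅ := by simp [hF, h]
      simp [this, h]
    · have : F n = {x n} := by simp [hF, h]
      rw [this, Set.ncard_singleton, Nat.even_add_one]
      tauto
end

section
/- Let ξ be an ordinal with ω ≤ ξ and let (a_ν)_{ν<ξ} be a family of pairwise almost disjoint infinite subsets of ℕ whose first ω members a_0, a_1, a_2, … are pairwise disjoint. Suppose c ⊆ ℕ is infinite, c ∩ a_ν is finite for every ν with ω ≤ ν < ξ, and c ∩ a_n is infinite for every n < ω. Let z ⊆ ℕ, and let d be an infinite subset of ℕ with d ∩ a_ν finite for every ν < ξ. Then there exists an infinite a ⊆ ℕ such that: (i) a ∩ d is infinite; (ii) a ∩ a_ν is finite for every ν < ξ; and (iii) for every n < ω, n ∈ z if and only if |a ∩ a_n| is even. -/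
open Ordinal

theorem stmt3 (ξ : Ordinal) (hξ : Ordinal.omega0 ≤ ξ)
    (a : Ordinal → Set ℕ)
    (hainf : ∀ ν < ξ, (a ν).Infinite)
    (had : ∀ ν < ξ, ∀ μ < ξ, ν ≠ μ → (a ν ∩ a μ).Finite)
    (hfirst : ∀ m n : ℕ, m ≠ n → Disjoint (a (m : Ordinal)) (a (n : Ordinal)))
    (c : Set ℕ) (hcinf : c.Infinite)
    (hc1 : ∀ ν, Ordinal.omega0 ≤ ν → ν < ξ → (c ∩ a ν).Finite)
    (hc2 : ∀ n : ℕ, (c ∩ a (n : Ordinal)).Infinite)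
    (z d : Set ℕ) (hdinf : d.Infinite)
    (hd : ∀ ν < ξ, (d ∩ a ν).Finite) :
    ∃ A : Set ℕ, A.Infinite ∧ (A ∩ d).Infinite ∧
      (∀ ν < ξ, (A ∩ a ν).Finite) ∧
      (∀ n : ℕ, n ∈ z ↔ Even (A ∩ a (n : Ordinal)).ncard) := by
  classical
  have hnat : ∀ n : ℕ, (n : Ordinal) < ξ := fun n =>
    lt_of_lt_of_le (Ordinal.nat_lt_omega0 n) hξ
  have hdan : ∀ n : ℕ, (d ∩ a (n : Ordinal)).Finite := fun n => hd _ (hnat n)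
  have hpick : ∀ n : ℕ, ((c ∩ a (n : Ordinal)) \ d).Infinite := by
    intro n
    have h1 := (hc2 n).diff (hdan n)
    refine h1.mono ?_
    intro y hy
    exact ⟨hy.1, fun hyd => hy.2 ⟨hyd, hy.1.2⟩⟩
  have hx : ∀ n : ℕ, (hpick n).nonempty.some ∈ (c ∩ a (n : Ordinal)) \ d := fun n =>
    (hpick n).nonempty.some_mem
  set x : ℕ → ℕ := fun n => (hpick n).nonempty.some with hxdef
  set F : ℕ → Set ℕ := fun n =>
    if (n ∈ z ↔ Even (d ∩ a (n : Ordinal)).ncard) then (∅ : Set ℕ) else {x n} with hFdef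
  have hFsub : ∀ n, F n ⊆ (c ∩ a (n : Ordinal)) \ d := by
    intro n y hy
    simp only [hFdef] at hy
    split at hy
    · exact absurd hy (Set.notMem_empty y)
    · rw [Set.mem_singleton_iff] at hy
      subst hy
      exact hx n
  have hFfin : ∀ n, (F n).Finite := by
    intro n
    simp only [hFdef]
    split
    · exact Set.finite_empty
    · exact Set.finite_singleton _
  refine ⟨d ∪ ⋃ n, F n, ?_, ?_, ?_, ?_⟩
  · exact hdinf.mono Set.subset_union_left
  · exact (hdinf.mono (Set.subset_inter Set.subset_union_left le_rfl)).mono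
      (by intro y hy; exact ⟨hy.1, hy.2⟩)
  · intro ν hν
    rcases lt_or_ge ν Ordinal.omega0 with hlt | hge
    · obtain ⟨m, rfl⟩ := Ordinal.lt_omega0.1 hlt
      have hsub : (d ∪ ⋃ n, F n) ∩ a (m : Ordinal) ⊆ (d ∩ a (m : Ordinal)) ∪ F m := by
        rintro y ⟨hy1 | hy1, hy2⟩
        · exact Or.inl ⟨hy1, hy2⟩
        · obtain ⟨k, hk⟩ := Set.mem_iUnion.1 hy1
          rcases eq_or_ne k m with rfl | hkm
          · exact Or.inr hk
          · exact absurd (Set.disjoint_left.1 (hfirst k m (by exact_mod_cast hkm))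
              ((hFsub k hk).1.2)) (fun h => h hy2)
      exact ((hdan m).union (hFfin m)).subset hsub
    · have hsub : (d ∪ ⋃ n, F n) ∩ a ν ⊆ (d ∩ a ν) ∪ (c ∩ a ν) := by
        rintro y ⟨hy1 | hy1, hy2⟩
        · exact Or.inl ⟨hy1, hy2⟩
        · obtain ⟨k, hk⟩ := Set.mem_iUnion.1 hy1
          exact Or.inr ⟨(hFsub k hk).1.1, hy2⟩
      exact ((hd ν hν).union (hc1 ν hge hν)).subset hsub
  · intro n
    have heq : (d ∪ ⋃ k, F k) ∩ a (n : Ordinal) = (d ∩ a (n : Ordinal)) ∪ F n := by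
      ext y
      constructor
      · rintro ⟨hy1 | hy1, hy2⟩
        · exact Or.inl ⟨hy1, hy2⟩
        · obtain ⟨k, hk⟩ := Set.mem_iUnion.1 hy1
          rcases eq_or_ne k n with rfl | hkn
          · exact Or.inr hk
          · exact absurd (Set.disjoint_left.1 (hfirst k n (by exact_mod_cast hkn))
              ((hFsub k hk).1.2)) (fun h => h hy2)
      · rintro (⟨hy1, hy2⟩ | hy)
        · exact ⟨Or.inl hy1, hy2⟩
        · exact ⟨Or.inr (Set.mem_iUnion.2 ⟨n, hy⟩), (hFsub n hy).1.2⟩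
    rw [heq]
    have hdisj : Disjoint (d ∩ a (n : Ordinal)) (F n) :=
      Set.disjoint_left.2 fun y hy hyF => (hFsub n hyF).2 hy.1
    rw [Set.ncard_union_eq hdisj (hdan n) (hFfin n)]
    by_cases hP : (n ∈ z ↔ Even (d ∩ a (n : Ordinal)).ncard)
    · have : F n = ∅ := by simp only [hFdef]; rw [if_pos hP]
      rw [this]
      simpa using hP
    · have : F n = {x n} := by simp only [hFdef]; rw [if_neg hP]
      rw [this, Set.ncard_singleton, Nat.even_add_one]
      tauto
end

section
/- Let ≺ be a well-order on the collection [ℕ]^ω of infinite subsets of ℕ, and let I be a well-ordered index set. Suppose (A_i)_{i∈I} is an increasing (under inclusion) family of almost disjoint families of infinite subsets of ℕ, and for each i ∈ I: (1) d_i is the ≺-least infinite set almost disjoint from every member of A_i; (2) there is a_i ∈ A_j for all j > i with a_i ∩ d_i infinite. Let 𝒜 = ⋃_{i∈I} A_i, and assume the family {d_i : i ∈ I} is ≺-cofinal in [ℕ]^ω (i.e., for every infinite x ⊆ ℕ there is i with x ⪯ d_i). Then 𝒜 is a maximal almost disjoint family: for every infinite x ⊆ ℕ there exists a ∈ 𝒜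 with a ∩ x infinite. -/
theorem stmt6 {I : Type*} [LinearOrder I] [WellFoundedLT I]
    (r : {s : Set ℕ // s.Infinite} → {s : Set ℕ // s.Infinite} → Prop)
    [IsWellOrder {s : Set ℕ // s.Infinite} r]
    (A : I → Set (Set ℕ))
    (hmono : ∀ i j : I, i ≤ j → A i ⊆ A j)
    (hinf : ∀ i, ∀ x ∈ A i, x.Infinite)
    (hadf : ∀ i, ∀ x ∈ A i, ∀ y ∈ A i, x ≠ y → (x ∩ y).Finite)
    (d : I → {s : Set ℕ // s.Infinite})
    (hleast : ∀ i, (∀ x ∈ A i, ((d i : Set ℕ) ∩ x).Finite) ∧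
      ∀ e : {s : Set ℕ // s.Infinite},
        (∀ x ∈ A i, ((e : Set ℕ) ∩ x).Finite) → d i = e ∨ r (d i) e)
    (a : I → Set ℕ)
    (ha : ∀ i, (∀ j, i < j → a i ∈ A j) ∧ (a i ∩ (d i : Set ℕ)).Infinite)
    (hcof : ∀ x : {s : Set ℕ // s.Infinite}, ∃ i, x = d i ∨ r x (d i)) :
    ∀ x : Set ℕ, x.Infinite → ∃ s ∈ ⋃ i, A i, (s ∩ x).Infinite := by
  intro x hx
  by_contra hbad
  push_neg at hbad
  simp only [Set.mem_iUnion, Set.not_infinite] at hbad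
  -- every set in the union meets x finitely
  have hfin : ∀ i, ∀ s ∈ A i, (s ∩ x).Finite := fun i s hs => hbad s ⟨i, hs⟩
  -- key : every infinite subset of x is some d k
  have key : ∀ (y : Set ℕ) (hy : y.Infinite), y ⊆ x → ∃ k, d k = ⟨y, hy⟩ := by
    intro y hy hyx
    obtain ⟨k, hk⟩ := hcof ⟨y, hy⟩
    have had : ∀ s ∈ A k, (y ∩ s).Finite := by
      intro s hs
      exact (hfin k s hs).subset fun m hm => ⟨hm.2, hyx hm.1⟩
    have := (hleast k).2 ⟨y, hy⟩ had
    rcases this with h | h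
    · exact ⟨k, h⟩
    · rcases hk with h' | h'
      · exact ⟨k, h'.symm⟩
      · exact absurd h' (Std.Asymm.asymm _ _ h)
  -- two distinct infinite subsets of x
  obtain ⟨n, hn⟩ := hx.nonempty
  have hy2 : (x \ {n}).Infinite := hx.diff (Set.finite_singleton n)
  obtain ⟨k1, hk1⟩ := key x hx (subset_refl x)
  obtain ⟨k2, hk2⟩ := key (x \ {n}) hy2 Set.diff_subset
  have hne : k1 ≠ k2 := by
    intro h
    rw [h, hk2] at hk1
    have hxx : x \ {n} = x := congrArg Subtype.val hk1
    have : n ∈ x \ {n} := hxx.symm ▸ hn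
    exact this.2 rfl
  -- in either order, we get a contradiction
  have contra : ∀ k k' : I, k < k' → ((d k : Set ℕ)) ⊆ x → False := by
    intro k k' hlt hsub
    have hmem : a k ∈ A k' := (ha k).1 k' hlt
    have : (a k ∩ x).Infinite :=
      ((ha k).2).mono (by intro m hm; exact ⟨hm.1, hsub hm.2⟩)
    exact this (hbad (a k) ⟨k', hmem⟩)
  rcases lt_or_gt_of_ne hne with h | h
  · exact contra k1 k2 h (by rw [hk1])
  · exact contra k2 k1 h (by rw [hk2]; exact Set.diff_subset)
end
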